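/- Fix blocks B₁, …, B_D, let χ_M : Fin M → Fin D be a finite block sequence with finite Jacobi matrix J_N(χ_M) ∈ ℝ^{N×N}, and let χ_per : ℤ → Fin D be the M-periodic extension of χ_M (χ_per(i) = χ_M(i mod M)). Then every λ ∈ ℝ for which the matrix J_N(χ_M) − λI is singular satisfies λ ∈ σ(J₊(χ_per)) ∪ σ(J₋(χ_per)). -/

import Mathlib

noncomputable section

/-- A block: a nonempty finite list of triples `(v, ℓ, s)` of positive reals. -/
def Block : Type :=
  {L : List (ℝ × ℝ × ℝ) // L ≠ [] ∧ ∀ t ∈ L, 0 < t.1 ∧ 0 < t.2.1 ∧ 0 < t.2.2}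

/-- The single-resonator propagation matrix `P^λ_{ℓ,s,v}`. -/
def propMat (lam ℓ s v : ℝ) : Matrix (Fin 2) (Fin 2) ℝ :=
  !![1 - s * ℓ * lam / v ^ 2, s; -(ℓ * lam / v ^ 2), 1]

/-- Propagation matrix of a resonator triple `(v, ℓ, s)`. -/
def propOf (lam : ℝ) (t : ℝ × ℝ × ℝ) : Matrix (Fin 2) (Fin 2) ℝ :=
  propMat lam t.2.1 t.2.2 t.1

/-- The block propagation matrix `𝒫^λ_B = P^λ_{ℓ_L,s_L,v_L} ⋯ P^λ_{ℓ₁,s₁,v₁}`. -/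
def blockMat (lam : ℝ) (Bd : Block) : Matrix (Fin 2) (Fin 2) ℝ :=
  ((Bd.1.map (propOf lam)).reverse).prod

/-- `data` (with block-start indices `st`) is the bi-infinite concatenation of the
blocks `B (χ j)`. -/
def IsConcat {D : ℕ} (B : Fin D → Block) (χ : ℤ → Fin D)
    (data : ℤ → ℝ × ℝ × ℝ) (st : ℤ → ℤ) : Prop :=
  st 0 = 0 ∧ (∀ j : ℤ, st (j + 1) = st j + ((B (χ j)).1.length : ℤ)) ∧
    ∀ (j : ℤ) (k : ℕ) (hk : k < (B (χ j)).1.length),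
      data (st j + (k : ℤ)) = (B (χ j)).1.get ⟨k, hk⟩

/-- `ℓ²(ℤ)`. -/
abbrev Hint := lp (fun _ : ℤ => ℝ) 2
/-- `ℓ²(ℤ≥0)`. -/
abbrev Hnat := lp (fun _ : ℕ => ℝ) 2
/-- `ℓ²(ℤ<0)`. -/
abbrev Hneg := lp (fun _ : {i : ℤ // i < 0} => ℝ) 2

/-- The off-diagonal band `a(i) = −v_i v_{i+1}/(s_i √(ℓ_i ℓ_{i+1}))`,
with `data i = (v_i, ℓ_i, s_i)`. -/
def aSeq (data : ℤ → ℝ × ℝ × ℝ) (i : ℤ) : ℝ :=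
  -((data i).1 * (data (i + 1)).1) /
    ((data i).2.2 * Real.sqrt ((data i).2.1 * (data (i + 1)).2.1))

/-- The diagonal band `b(i) = (v_i²/ℓ_i)(1/s_{i−1} + 1/s_i)`. -/
def bSeq (data : ℤ → ℝ × ℝ × ℝ) (i : ℤ) : ℝ :=
  ((data i).1 ^ 2 / (data i).2.1) * (1 / (data (i - 1)).2.2 + 1 / (data i).2.2)

/-- `J` is the Jacobi operator on `ℓ²(ℤ)` with bands `a`, `b` built from `data`. -/
def IsJacobiOf (data : ℤ → ℝ × ℝ × ℝ) (J : Hint →L[ℝ] Hint) : Prop :=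
  ∀ (x : Hint) (i : ℤ),
    J x i = aSeq data (i - 1) * x (i - 1) + bSeq data i * x i + aSeq data i * x (i + 1)

/-- `Jp` is the positive semi-infinite Jacobi operator with corner entry
`b(0) = v₀²/(ℓ₀s₀)`. -/
def IsJacobiPlusOf (data : ℤ → ℝ × ℝ × ℝ) (Jp : Hnat →L[ℝ] Hnat) : Prop :=
  (∀ x : Hnat,
      Jp x 0 = (data 0).1 ^ 2 / ((data 0).2.1 * (data 0).2.2) * x 0 + aSeq data 0 * x 1) ∧
  (∀ (x : Hnat) (n : ℕ),
      Jp x (n + 1) = aSeq data (n : ℤ) * x n + bSeq data ((n : ℤ) + 1) * x (n + 1) +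
        aSeq data ((n : ℤ) + 1) * x (n + 2))

/-- `Jm` is the negative semi-infinite Jacobi operator with corner entry
`b(−1) = v₋₁²/(ℓ₋₁s₋₂)`. -/
def IsJacobiMinusOf (data : ℤ → ℝ × ℝ × ℝ) (Jm : Hneg →L[ℝ] Hneg) : Prop :=
  (∀ x : Hneg,
      Jm x ⟨-1, by norm_num⟩ =
        (data (-1)).1 ^ 2 / ((data (-1)).2.1 * (data (-2)).2.2) * x ⟨-1, by norm_num⟩ +
          aSeq data (-2) * x ⟨-2, by norm_num⟩) ∧
  (∀ (x : Hneg) (i : ℤ) (hi : i < -1),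
      Jm x ⟨i, by omega⟩ =
        aSeq data (i - 1) * x ⟨i - 1, by omega⟩ + bSeq data i * x ⟨i, by omega⟩ +
          aSeq data i * x ⟨i + 1, by omega⟩)

/-- The reflection-doubling of a semi-infinite sequence. -/
def reflDouble {D : ℕ} (χp : ℕ → Fin D) : ℤ → Fin D :=
  fun i => if 0 ≤ i then χp i.toNat else χp (-i - 1).toNat

/-- The `M`-periodic extension of a finite sequence. -/
def periodify {D : ℕ} (M : ℕ) (hM : 0 < M) (χM : Fin M → Fin D) : ℤ → Fin D :=
  fun i => χM ⟨(i % (M : ℤ)).toNat, by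
    have h1 : 0 ≤ i % (M : ℤ) := Int.emod_nonneg i (by exact_mod_cast hM.ne')
    have h2 : i % (M : ℤ) < (M : ℤ) := Int.emod_lt_of_pos i (by exact_mod_cast hM)
    omega⟩

/-- The finite `N×N` Jacobi matrix with bands from `data` and physical corner entries. -/
def finJacobi (data : ℤ → ℝ × ℝ × ℝ) (N : ℕ) : Matrix (Fin N) (Fin N) ℝ :=
  Matrix.of fun i j : Fin N =>
    if (i : ℕ) + 1 = (j : ℕ) then aSeq data ((i : ℕ) : ℤ)
    else if (j : ℕ) + 1 = (i : ℕ) then aSeq data ((j : ℕ) : ℤ)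
    else if i = j then
      (if (i : ℕ) = 0 then (data 0).1 ^ 2 / ((data 0).2.1 * (data 0).2.2)
       else if (i : ℕ) = N - 1 then
         (data ((i : ℕ) : ℤ)).1 ^ 2 /
           ((data ((i : ℕ) : ℤ)).2.1 * (data (((i : ℕ) : ℤ) - 1)).2.2)
       else bSeq data ((i : ℕ) : ℤ))
    else 0


/-!
The data are `N`-periodic, and the corner entries of `J_N` are the periodic diagonal entries
`b(0)`, `b(N-1)` lowered by the two terms `p = v₀²/(ℓ₀s₋₁)` and `q = v₋₁²/(ℓ₋₁s₋₁)` of the bond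
between the resonators `-1` and `0`, where `a(-1)² = pq`. Let `u` be a kernel vector of
`J_N(χ_M) - λ`; its end values are nonzero because `a` never vanishes. Gluing the copies `μᵏu`
along the periods with the Floquet multiplier `μ = -q u_{N-1}/(a(-1) u₀)` gives a solution `x` of
the periodic bi-infinite eigenvalue equation that satisfies the boundary conditions of both
`J₊` and `J₋` at the cut, so `x` restricts to formal eigenvectors of both. If `|μ| ≤ 1` the
truncations of `x` to `[0, KN)` form a Weyl sequence for `J₊` (residual `O(|μ|ᴷ)`, norm
`≳ √K |μ|ᴷ`); if `|μ| ≥ 1` the same works for `J₋` with `μ⁻¹`. For `N = 1`, `J₊` has constant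
coefficients `a = -λ`, `b = 2λ` and corner `λ`, and the bounded solution `1, 0, -1, -1, 0, 1, …`
of period `6` serves instead.
-/

open Finset Function
open scoped ENNReal

theorem mem_spectrum_of_forall_exists_norm_lt {𝕜 E : Type*} [NontriviallyNormedField 𝕜]
    [NormedAddCommGroup E] [NormedSpace 𝕜 E] {T : E →L[𝕜] E} {lam : 𝕜}
    (h : ∀ C : ℝ, 0 ≤ C → ∃ y : E, C * ‖lam • y - T y‖ < ‖y‖) : lam ∈ spectrum 𝕜 T := by
  rintro ⟨S, hS⟩
  obtain ⟨y, hy⟩ := h ‖(↑S⁻¹ : E →L[𝕜] E)‖ (norm_nonneg _)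
  have hinv : (↑S⁻¹ : E →L[𝕜] E) (lam • y - T y) = y := by
    have := congrArg (fun A : E →L[𝕜] E => A y) S.inv_mul
    simpa [hS, Algebra.algebraMap_eq_smul_one] using this
  have := (↑S⁻¹ : E →L[𝕜] E).le_opNorm (lam • y - T y)
  rw [hinv] at this
  exact hy.not_ge this

section Reindex

variable {α β 𝕜 E : Type*} [NormedRing 𝕜] [NormedAddCommGroup E] [Module 𝕜 E] [IsBoundedSMul 𝕜 E]
  {p : ℝ≥0∞}

theorem Memℓp.comp_equiv {f : β → E} (hf : Memℓp f p) (hp : 0 < p.toReal) (e : α ≃ β) :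
    Memℓp (f ∘ e) p :=
  (memℓp_gen_iff hp).2
    ((e.summable_iff (f := fun b => ‖f b‖ ^ p.toReal)).2 ((memℓp_gen_iff hp).1 hf))

def lp.reindex [Fact (1 ≤ p)] (hp : 0 < p.toReal) (e : α ≃ β) :
    lp (fun _ : β => E) p ≃ₗᵢ[𝕜] lp (fun _ : α => E) p where
  toFun f := ⟨f ∘ e, (lp.memℓp f).comp_equiv hp e⟩
  invFun g := ⟨g ∘ e.symm, (lp.memℓp g).comp_equiv hp e.symm⟩
  map_add' f g := rfl
  map_smul' c f := rfl
  left_inv f := lp.ext (funext fun b => congrArg f (e.apply_symm_apply b))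
  right_inv g := lp.ext (funext fun a => congrArg g (e.symm_apply_apply a))
  norm_map' f := by
    simp only [LinearEquiv.coe_mk, lp.norm_eq_tsum_rpow hp]
    exact congrArg (· ^ _) (e.tsum_eq fun b => ‖f b‖ ^ p.toReal)

@[simp]
theorem lp.reindex_apply [Fact (1 ≤ p)] (hp : 0 < p.toReal) (e : α ≃ β)
    (f : lp (fun _ : β => E) p) (a : α) :
    lp.reindex (𝕜 := 𝕜) hp e f a = f (e a) := rfl

@[simp]
theorem lp.reindex_symm_apply [Fact (1 ≤ p)] (hp : 0 < p.toReal) (e : α ≃ β)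
    (g : lp (fun _ : α => E) p) (b : β) : (lp.reindex (𝕜 := 𝕜) hp e).symm g b = g (e.symm b) := rfl

end Reindex

section HalfLine

def jacobiAction (a b x : ℕ → ℝ) : ℕ → ℝ
  | 0 => b 0 * x 0 + a 0 * x 1
  | n + 1 => a n * x n + b (n + 1) * x (n + 1) + a (n + 1) * x (n + 2)

def IsHalfLineJacobi (a b : ℕ → ℝ) (J : Hnat →L[ℝ] Hnat) : Prop :=
  ∀ x : Hnat, ⇑(J x) = jacobiAction a b ⇑x

theorem coe_sum_single_range (m : ℕ) (x : ℕ → ℝ) :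
    ⇑(∑ n ∈ range m, lp.single 2 n (x n) : Hnat) = fun n => if n < m then x n else 0 := by
  ext n
  simp only [lp.coeFn_single, lp.coeFn_sum, Finset.sum_apply, Finset.sum_pi_single, mem_range]

theorem norm_sum_single_range (m : ℕ) (x : ℕ → ℝ) :
    ‖(∑ n ∈ range m, lp.single 2 n (x n) : Hnat)‖ = √(∑ n ∈ range m, x n ^ 2) := by
  have h := lp.norm_sum_single (E := fun _ : ℕ => ℝ) (p := 2) (by norm_num) x (range m)
  simp only [ENNReal.toReal_ofNat, Real.rpow_two, Real.norm_eq_abs, sq_abs] at h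
  rw [← h, Real.sqrt_sq (norm_nonneg _)]

theorem sum_comp_mul_le_sum_range_mul {f : ℕ → ℝ} (hf : ∀ n, 0 ≤ f n) {N : ℕ} (hN : 0 < N)
    (K : ℕ) : ∑ k ∈ range K, f (k * N) ≤ ∑ n ∈ range (K * N), f n := by
  rw [← sum_image fun _ _ _ _ h => Nat.eq_of_mul_eq_mul_right hN h]
  refine sum_le_sum_of_subset_of_nonneg (fun n hn => ?_) fun n _ _ => hf n
  simp only [mem_image, mem_range] at hn ⊢
  obtain ⟨k, hk, rfl⟩ := hn
  exact Nat.mul_lt_mul_of_pos_right hk hN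

variable {a b x : ℕ → ℝ} {lam : ℝ}

theorem jacobiAction_truncate (hx : jacobiAction a b x = lam • x) {m : ℕ} (hm : 1 ≤ m) :
    lam • (fun n => if n < m then x n else 0) -
        jacobiAction a b (fun n => if n < m then x n else 0) =
      Pi.single (m - 1) (a (m - 1) * x m) + Pi.single m (-(a (m - 1) * x (m - 1))) := by
  funext n
  have h := congrFun hx n
  simp only [Pi.sub_apply, Pi.add_apply, Pi.smul_apply, Pi.single_apply, smul_eq_mul] at h ⊢
  cases n with
  | zero =>
    rcases hm.eq_or_lt with rfl | hm
    · simp only [jacobiAction, zero_lt_one, lt_irrefl, ↓reduceIte, Nat.sub_self, zero_ne_one,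
        mul_zero, add_zero] at h ⊢
      linear_combination -h
    · simp only [jacobiAction, show 0 < m by omega, show 1 < m by omega, show ¬0 = m - 1 by omega,
        show ¬0 = m by omega, ↓reduceIte, add_zero] at h ⊢
      linear_combination -h
  | succ n =>
    rcases lt_trichotomy (n + 2) m with hn | rfl | hn
    · simp only [jacobiAction, show n < m by omega, show n + 1 < m by omega, hn,
        show ¬n + 1 = m - 1 by omega, show ¬n + 1 = m by omega, ↓reduceIte, add_zero] at h ⊢
      linear_combination -h
    · simp only [jacobiAction, show n < n + 2 by omega, show n + 1 < n + 2 by omega,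
        lt_irrefl, show n + 2 - 1 = n + 1 by omega, show ¬n + 1 = n + 2 by omega, ↓reduceIte, mul_zero,
        add_zero] at h ⊢
      linear_combination -h
    · rcases (show n + 1 = m ∨ m ≤ n by omega) with rfl | hn'
      · simp only [jacobiAction, show n < n + 1 by omega, lt_irrefl, show ¬n + 2 < n + 1 by omega,
          Nat.add_sub_cancel, show ¬n + 1 = n by omega, ↓reduceIte, mul_zero, add_zero, zero_add]
        ring
      · simp only [jacobiAction, show ¬n < m by omega, show ¬n + 1 < m by omega,
          show ¬n + 2 < m by omega, show ¬n + 1 = m - 1 by omega, show ¬n + 1 = m by omega,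
          ↓reduceIte, mul_zero, add_zero, sub_self]

theorem IsHalfLineJacobi.mem_spectrum_of_truncations {J : Hnat →L[ℝ] Hnat}
    (hJ : IsHalfLineJacobi a b J)
    (hx : jacobiAction a b x = lam • x)
    (hgrow : ∀ C : ℝ, 0 ≤ C → ∃ m, 1 ≤ m ∧
      C * (|a (m - 1)| * (|x m| + |x (m - 1)|)) < √(∑ n ∈ range m, x n ^ 2)) :
    lam ∈ spectrum ℝ J := by
  refine mem_spectrum_of_forall_exists_norm_lt fun C hC => ?_
  obtain ⟨m, hm, hlt⟩ := hgrow C hC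
  set y : Hnat := ∑ n ∈ range m, lp.single 2 n (x n)
  have hres : lam • y - J y =
      lp.single 2 (m - 1) (a (m - 1) * x m) + lp.single 2 m (-(a (m - 1) * x (m - 1))) := by
    refine lp.ext ?_
    rw [lp.coeFn_sub, lp.coeFn_smul, hJ, coe_sum_single_range, jacobiAction_truncate hx hm]
    rfl
  refine ⟨y, lt_of_le_of_lt ?_ (hlt.trans_eq (norm_sum_single_range m x).symm)⟩
  gcongr
  rw [hres]
  refine (norm_add_le _ _).trans ?_
  simp only [lp.norm_single (p := 2) (by norm_num), Real.norm_eq_abs, abs_neg, abs_mul]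
  linarith

theorem pow_mul_of_add_eq_mul {N : ℕ} {ν : ℝ} (hxν : ∀ n, x (n + N) = ν * x n) (k r : ℕ) :
    x (k * N + r) = ν ^ k * x r := by
  induction k with
  | zero => simp
  | succ k ih => rw [show (k + 1) * N + r = k * N + r + N by ring, hxν, ih, pow_succ']; ring

theorem floquet_residual_le {N : ℕ} {ν : ℝ} (hN : 0 < N) (ha : Periodic a N) (hν : |ν| ≤ 1)
    (hxν : ∀ n, x (n + N) = ν * x n) (K : ℕ) :
    |a ((K + 1) * N - 1)| * (|x ((K + 1) * N)| + |x ((K + 1) * N - 1)|) ≤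
      |ν| ^ K * (|a (N - 1)| * (|x 0| + |x (N - 1)|)) := by
  have hlast : (K + 1) * N - 1 = K * N + (N - 1) := by rw [Nat.succ_mul]; omega
  have hx₀ : |x ((K + 1) * N)| ≤ |ν| ^ K * |x 0| := by
    rw [← add_zero ((K + 1) * N), pow_mul_of_add_eq_mul hxν, abs_mul, abs_pow]
    exact mul_le_mul_of_nonneg_right (pow_le_pow_of_le_one (abs_nonneg ν) hν K.le_succ)
      (abs_nonneg _)
  have haK : a (K * N + (N - 1)) = a (N - 1) := by
    simpa [add_comm] using ha.nat_mul K (N - 1)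
  rw [hlast, haK, pow_mul_of_add_eq_mul hxν, abs_mul, abs_pow]
  nlinarith [abs_nonneg (a (N - 1)), abs_nonneg (x (N - 1))]

theorem floquet_sum_sq_ge {N : ℕ} {ν : ℝ} (hN : 0 < N) (hν : |ν| ≤ 1)
    (hxν : ∀ n, x (n + N) = ν * x n) (K : ℕ) :
    (K + 1) * (|ν| ^ K * |x 0|) ^ 2 ≤ ∑ n ∈ range ((K + 1) * N), x n ^ 2 := by
  refine le_trans ?_ (sum_comp_mul_le_sum_range_mul (fun n => sq_nonneg (x n)) hN (K + 1))
  rw [show ((K : ℝ) + 1) * (|ν| ^ K * |x 0|) ^ 2 = ∑ _k ∈ range (K + 1), (|ν| ^ K * |x 0|) ^ 2 by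
    simp]
  refine sum_le_sum fun k hk => ?_
  have hxk : |ν| ^ K * |x 0| ≤ |x (k * N)| := by
    rw [← add_zero (k * N), pow_mul_of_add_eq_mul hxν, abs_mul, abs_pow]
    exact mul_le_mul_of_nonneg_right (pow_le_pow_of_le_one (abs_nonneg ν) hν
      (Nat.lt_succ_iff.1 (mem_range.1 hk))) (abs_nonneg _)
  simpa only [sq_abs] using pow_le_pow_left₀ (by positivity) hxk 2

/-- At `m = (K + 1) * N` the residual of the truncation is `O(|ν| ^ K)` while its norm is
`≥ √(K + 1) |ν| ^ K |x 0|`. -/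
theorem IsHalfLineJacobi.mem_spectrum_of_floquet {J : Hnat →L[ℝ] Hnat}
    (hJ : IsHalfLineJacobi a b J) (hx : jacobiAction a b x = lam • x) {N : ℕ} (hN : 0 < N)
    (ha : Periodic a N) {ν : ℝ} (hν₀ : ν ≠ 0) (hν : |ν| ≤ 1) (hxν : ∀ n, x (n + N) = ν * x n)
    (hx₀ : x 0 ≠ 0) : lam ∈ spectrum ℝ J := by
  refine hJ.mem_spectrum_of_truncations hx fun C hC => ?_
  set A := |a (N - 1)| * (|x 0| + |x (N - 1)|)
  obtain ⟨K, hK⟩ := exists_nat_gt ((C * A / |x 0|) ^ 2)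
  have hK' : C * A / |x 0| < √(K + 1) := Real.lt_sqrt_of_sq_lt (by linarith)
  have hpos : 0 < |ν| ^ K * |x 0| := by positivity
  refine ⟨(K + 1) * N, Nat.one_le_iff_ne_zero.2 (by positivity), ?_⟩
  calc C * (|a ((K + 1) * N - 1)| * (|x ((K + 1) * N)| + |x ((K + 1) * N - 1)|))
      ≤ C * (|ν| ^ K * A) := mul_le_mul_of_nonneg_left (floquet_residual_le hN ha hν hxν K) hC
    _ = C * A / |x 0| * (|ν| ^ K * |x 0|) := by field_simp
    _ < √(K + 1) * (|ν| ^ K * |x 0|) := by gcongr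
    _ = √((K + 1) * (|ν| ^ K * |x 0|) ^ 2) := by
      rw [Real.sqrt_mul (by positivity), Real.sqrt_sq hpos.le]
    _ ≤ _ := Real.sqrt_le_sqrt (by exact_mod_cast floquet_sum_sq_ge hN hν hxν K)

end HalfLine

section Line

def jacobiRow (a b x : ℤ → ℝ) (i : ℤ) : ℝ :=
  a (i - 1) * x (i - 1) + b i * x i + a i * x (i + 1)

theorem jacobiRow_reflect (c : ℤ) (a b x : ℤ → ℝ) (i : ℤ) :
    jacobiRow (fun j => a (c - 1 - j)) (fun j => b (c - j)) (fun j => x (c - j)) i =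
      jacobiRow a b x (c - i) := by
  simp only [jacobiRow]
  rw [show c - 1 - (i - 1) = c - i by ring, show c - (i - 1) = c - i + 1 by ring,
    show c - 1 - i = c - i - 1 by ring, show c - (i + 1) = c - i - 1 by ring]
  ring

variable {a b d w x : ℤ → ℝ} {lam μ : ℝ} {N : ℤ}

theorem jacobiRow_add_period (ha : Periodic a N) (hb : Periodic b N)
    (hx : ∀ i, x (i + N) = μ * x i) (i : ℤ) :
    jacobiRow a b x (i + N) = μ * jacobiRow a b x i := by
  simp only [jacobiRow]
  rw [show i + N - 1 = i - 1 + N by ring, show i + N + 1 = i + 1 + N by ring, ha, hb, ha, hx, hx,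
    hx]
  ring

theorem eq_zpow_mul_emod {f : ℤ → ℝ} (hf : ∀ i, f (i + N) = μ * f i) (hμ : μ ≠ 0) (i : ℤ) :
    f i = μ ^ (i / N) * f (i % N) := by
  have key : ∀ k r : ℤ, f (r + N * k) = μ ^ k * f r := by
    intro k r
    induction k using Int.induction_on with
    | zero => simp
    | succ k ih => rw [mul_add, mul_one, ← add_assoc, hf, ih, zpow_add_one₀ hμ]; ring
    | pred k ih =>
      have h := hf (r + N * (-k - 1))
      rw [show r + N * (-k - 1) + N = r + N * -k by ring, ih] at h
      rw [zpow_sub_one₀ hμ]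
      field_simp
      linear_combination -h
  conv_lhs => rw [← Int.emod_add_mul_ediv i N]
  exact key _ _

theorem jacobiRow_eq_of_forall_Ico (ha : Periodic a N) (hb : Periodic b N)
    (hx : ∀ i, x (i + N) = μ * x i) (hμ : μ ≠ 0)
    (h : ∀ i, 0 ≤ i → i < N → jacobiRow a b x i = lam * x i) (hN : 0 < N) (i : ℤ) :
    jacobiRow a b x i = lam * x i := by
  have hres : ∀ i, jacobiRow a b x (i + N) - lam * x (i + N) =
      μ * (jacobiRow a b x i - lam * x i) := fun i => by
    rw [jacobiRow_add_period ha hb hx, hx]; ring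
  have := eq_zpow_mul_emod (f := fun i => jacobiRow a b x i - lam * x i) hres hμ i
  rw [h _ (Int.emod_nonneg i hN.ne') (Int.emod_lt_of_pos i hN), sub_self, mul_zero] at this
  exact sub_eq_zero.1 this

theorem eq_zero_of_jacobiRow_eq (ha : ∀ i, a i ≠ 0) {n : ℤ}
    (hrow : ∀ i, 0 ≤ i → i < n → jacobiRow a d w i = lam * w i) (h₁ : w (-1) = 0)
    (h₀ : w 0 = 0) {i : ℤ} (hi₀ : 0 ≤ i) (hin : i ≤ n) : w i = 0 := by
  have key : ∀ k : ℕ, (k : ℤ) ≤ n → w k = 0 ∧ w (k - 1) = 0 := by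
    intro k
    induction k with
    | zero => intro; exact ⟨h₀, h₁⟩
    | succ k ih =>
      intro hk
      obtain ⟨hk₀, hk₁⟩ := ih (by omega)
      have h := hrow k (by omega) (by omega)
      simp only [jacobiRow, hk₀, hk₁, mul_zero, add_zero, zero_add] at h
      push_cast
      exact ⟨(mul_eq_zero.1 h).resolve_left (ha k), by simpa using hk₀⟩
  simpa [Int.toNat_of_nonneg hi₀] using (key i.toNat (by omega)).1

theorem jacobi_endpoints_ne_zero (ha : ∀ i, a i ≠ 0) (hsupp : ∀ i, i < 0 ∨ N ≤ i → w i = 0)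
    (hw : w ≠ 0) (hrow : ∀ i, 0 ≤ i → i < N → jacobiRow a d w i = lam * w i) :
    w 0 ≠ 0 ∧ w (N - 1) ≠ 0 := by
  refine ⟨fun h₀ => hw (funext fun i => ?_), fun h₀ => hw (funext fun i => ?_)⟩
  · by_cases hi : 0 ≤ i ∧ i ≤ N
    · exact eq_zero_of_jacobiRow_eq ha hrow (hsupp _ (by omega)) h₀ hi.1 hi.2
    · exact hsupp i (by omega)
  · by_cases hi : -1 ≤ i ∧ i ≤ N - 1
    · have hrow' : ∀ j, 0 ≤ j → j < N → jacobiRow (fun j => a (N - 1 - 1 - j))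
          (fun j => d (N - 1 - j)) (fun j => w (N - 1 - j)) j = lam * w (N - 1 - j) :=
        fun j hj₀ hjN => by rw [jacobiRow_reflect]; exact hrow _ (by omega) (by omega)
      have := eq_zero_of_jacobiRow_eq (fun j => ha _) hrow' (hsupp _ (by omega))
        (by simpa using h₀) (i := N - 1 - i) (by omega) (by omega)
      simpa using this
    · exact hsupp i (by omega)

def floquetExt (N : ℤ) (μ : ℝ) (w : ℤ → ℝ) (i : ℤ) : ℝ :=
  μ ^ (i / N) * w (i % N)

theorem floquetExt_add_period (hN : N ≠ 0) (hμ : μ ≠ 0) (w : ℤ → ℝ) (i : ℤ) :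
    floquetExt N μ w (i + N) = μ * floquetExt N μ w i := by
  simp only [floquetExt]
  rw [Int.add_ediv_of_dvd_right (dvd_refl N), Int.ediv_self hN, Int.add_emod_right,
    zpow_add_one₀ hμ]
  ring

theorem floquetExt_of_mem (μ : ℝ) (w : ℤ → ℝ) {i : ℤ} (hi₀ : 0 ≤ i) (hiN : i < N) :
    floquetExt N μ w i = w i := by
  simp [floquetExt, Int.ediv_eq_zero_of_lt hi₀ hiN, Int.emod_eq_of_lt hi₀ hiN]

theorem jacobiRow_floquetExt_of_mem (hN : 2 ≤ N) (ha : Periodic a N) (hμ : μ ≠ 0) {p q : ℝ}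
    (hd₀ : d 0 = b 0 - p) (hdN : d (N - 1) = b (N - 1) - q)
    (hd : ∀ i, 0 < i → i < N - 1 → d i = b i) (hsupp : ∀ i, i < 0 ∨ N ≤ i → w i = 0)
    (hrow : ∀ i, 0 ≤ i → i < N → jacobiRow a d w i = lam * w i)
    (hcut₀ : a (-1) * floquetExt N μ w (-1) + p * w 0 = 0)
    (hcut₁ : a (-1) * w 0 + q * floquetExt N μ w (-1) = 0) {i : ℤ} (hi₀ : 0 ≤ i) (hiN : i < N) :
    jacobiRow a b (floquetExt N μ w) i = lam * floquetExt N μ w i := by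
  set x := floquetExt N μ w
  have hx : ∀ i, x (i + N) = μ * x i := floquetExt_add_period (by omega) hμ w
  have hxw : ∀ i, 0 ≤ i → i < N → x i = w i := fun i hi₀ hiN => floquetExt_of_mem μ w hi₀ hiN
  have h := hrow i hi₀ hiN
  rcases (show i = 0 ∨ i = N - 1 ∨ (0 < i ∧ i < N - 1) by omega) with rfl | rfl | ⟨hi₁, hiN₁⟩
  · simp only [jacobiRow, zero_sub, zero_add] at h ⊢
    rw [hsupp (-1) (by omega), hd₀] at h
    rw [hxw 0 le_rfl (by omega), hxw 1 (by omega) (by omega)]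
    linear_combination h + hcut₀
  · simp only [jacobiRow, sub_add_cancel] at h ⊢
    rw [hsupp N (by omega), hdN] at h
    have haN : a (N - 1) = a (-1) := by rw [← ha (-1), neg_add_eq_sub]
    have hwx : w (N - 1) = μ * x (-1) := by
      rw [← hxw _ (by omega) (by omega), ← hx, neg_add_eq_sub]
    rw [hxw (N - 1 - 1) (by omega) (by omega), hxw (N - 1) (by omega) (by omega), ← zero_add N,
      hx 0, zero_add, haN, hxw 0 le_rfl (by omega)]
    linear_combination h + μ * hcut₁ + q * hwx
  · simp only [jacobiRow] at h ⊢
    rwa [hxw (i - 1) (by omega) (by omega), hxw i hi₀ hiN, hxw (i + 1) (by omega) (by omega),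
      ← hd i hi₁ hiN₁]

/-- `μ` is chosen to make `a (-1) * x 0 + q * x (-1) = 0`; the other cut condition then follows
from `a (-1) ^ 2 = p * q`. -/
theorem exists_floquet_solution (hN : 2 ≤ N) (ha : Periodic a N) (hb : Periodic b N)
    (ha₀ : ∀ i, a i ≠ 0) {p q : ℝ} (hpq : a (-1) ^ 2 = p * q) (hq : q ≠ 0)
    (hd₀ : d 0 = b 0 - p) (hdN : d (N - 1) = b (N - 1) - q)
    (hd : ∀ i, 0 < i → i < N - 1 → d i = b i)
    (hsupp : ∀ i, i < 0 ∨ N ≤ i → w i = 0) (hw : w ≠ 0)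
    (hrow : ∀ i, 0 ≤ i → i < N → jacobiRow a d w i = lam * w i) :
    ∃ μ ≠ 0, ∃ x : ℤ → ℝ, (∀ i, x (i + N) = μ * x i) ∧ x 0 ≠ 0 ∧
      (∀ i, jacobiRow a b x i = lam * x i) ∧
      a (-1) * x (-1) + p * x 0 = 0 ∧ a (-1) * x 0 + q * x (-1) = 0 := by
  obtain ⟨hw₀, hwN⟩ := jacobi_endpoints_ne_zero ha₀ hsupp hw hrow
  set μ := -(q * w (N - 1)) / (a (-1) * w 0) with hμdef
  have hμ : μ ≠ 0 := div_ne_zero (neg_ne_zero.2 (mul_ne_zero hq hwN)) (mul_ne_zero (ha₀ _) hw₀)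
  have hx : ∀ i, floquetExt N μ w (i + N) = μ * floquetExt N μ w i :=
    floquetExt_add_period (by omega) hμ w
  have hx₀ : floquetExt N μ w 0 = w 0 := floquetExt_of_mem μ w le_rfl (by omega)
  have hxneg : floquetExt N μ w (-1) = μ⁻¹ * w (N - 1) := by
    rw [← floquetExt_of_mem (N := N) μ w (i := N - 1) (by omega) (by omega), ← neg_add_eq_sub, hx,
      inv_mul_cancel_left₀ hμ]
  have hcut₀ : a (-1) * floquetExt N μ w (-1) + p * w 0 = 0 := by
    rw [hxneg, hμdef]
    field_simp
    linear_combination (-w 0) * hpq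
  have hcut₁ : a (-1) * w 0 + q * floquetExt N μ w (-1) = 0 := by
    rw [hxneg, hμdef]
    field_simp
    ring
  refine ⟨μ, hμ, floquetExt N μ w, hx, hx₀ ▸ hw₀, ?_, hx₀ ▸ hcut₀, hx₀ ▸ hcut₁⟩
  exact jacobiRow_eq_of_forall_Ico ha hb hx hμ (fun i hi₀ hiN =>
    jacobiRow_floquetExt_of_mem hN ha hμ hd₀ hdN hd hsupp hrow hcut₀ hcut₁ hi₀ hiN) (by omega)

end Line

section Restrict

variable {a b x : ℤ → ℝ} {lam μ : ℝ}

theorem jacobiAction_restrict {p : ℝ} (hx : ∀ i, jacobiRow a b x i = lam * x i)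
    (hcut : a (-1) * x (-1) + p * x 0 = 0) :
    jacobiAction (fun n : ℕ => a n) (fun n : ℕ => if n = 0 then b 0 - p else b n)
      (fun n : ℕ => x n) = lam • fun n : ℕ => x n := by
  funext n
  cases n with
  | zero =>
    have h := hx 0
    simp only [jacobiRow, zero_sub, zero_add] at h
    simp only [jacobiAction, Pi.smul_apply, smul_eq_mul, if_true, Nat.cast_zero, Nat.cast_one]
    linear_combination h - hcut
  | succ n =>
    have h := hx (n + 1)
    simp only [jacobiRow, add_sub_cancel_right, add_assoc, one_add_one_eq_two] at h
    simp only [jacobiAction, Pi.smul_apply, smul_eq_mul, Nat.cast_add, Nat.cast_one, Nat.cast_ofNat,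
      add_assoc, if_neg (Nat.succ_ne_zero n)]
    exact h

theorem IsHalfLineJacobi.mem_spectrum_of_cut {J : Hnat →L[ℝ] Hnat} {p : ℝ}
    (hJ : IsHalfLineJacobi (fun n : ℕ => a n) (fun n : ℕ => if n = 0 then b 0 - p else b n) J)
    {N : ℕ} (hN : 0 < N) (ha : Periodic a N) (hx : ∀ i, jacobiRow a b x i = lam * x i)
    (hcut : a (-1) * x (-1) + p * x 0 = 0) (hxμ : ∀ i, x (i + N) = μ * x i) (hμ₀ : μ ≠ 0)
    (hμ : |μ| ≤ 1) (hx₀ : x 0 ≠ 0) : lam ∈ spectrum ℝ J :=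
  hJ.mem_spectrum_of_floquet (jacobiAction_restrict hx hcut) hN
    (fun n => by simpa using ha n) hμ₀ hμ (fun n => by simpa using hxμ n) hx₀

theorem IsHalfLineJacobi.mem_spectrum_of_cut_neg {J : Hnat →L[ℝ] Hnat} {q : ℝ}
    (hJ : IsHalfLineJacobi (fun n : ℕ => a (-n - 2))
      (fun n : ℕ => if n = 0 then b (-1) - q else b (-n - 1)) J)
    {N : ℕ} (hN : 0 < N) (ha : Periodic a N) (hx : ∀ i, jacobiRow a b x i = lam * x i)
    (hcut : a (-1) * x 0 + q * x (-1) = 0) (hxμ : ∀ i, x (i + N) = μ * x i) (hμ₀ : μ ≠ 0)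
    (hμ : 1 ≤ |μ|) (hx₁ : x (-1) ≠ 0) : lam ∈ spectrum ℝ J := by
  refine IsHalfLineJacobi.mem_spectrum_of_cut (a := fun j => a (-1 - 1 - j))
    (b := fun j => b (-1 - j)) (x := fun j => x (-1 - j)) (μ := μ⁻¹) (p := q) ?_ hN
    (fun i => by simpa [sub_add_eq_sub_sub] using ha.sub_eq (-1 - 1 - i))
    (fun i => by rw [jacobiRow_reflect]; exact hx _) (by simpa [mul_comm] using hcut) (fun i => ?_)
    (inv_ne_zero hμ₀) (by rw [abs_inv]; exact inv_le_one_of_one_le₀ hμ) (by simpa using hx₁)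
  · convert hJ using 2 with n n
    · ring_nf
    · rw [sub_zero, show (-1 : ℤ) - n = -n - 1 by ring]
  · have h := hxμ (-1 - (i + N))
    simp only [show -1 - (i + N) + N = -1 - i by ring] at h
    rw [h, inv_mul_cancel_left₀ hμ₀]

end Restrict

section Concat

variable {D : ℕ} {B : Fin D → Block} {χ : ℤ → Fin D} {data : ℤ → ℝ × ℝ × ℝ} {st : ℤ → ℤ}

theorem Block.length_pos (Bd : Block) : 0 < Bd.1.length :=
  List.length_pos_iff.2 Bd.2.1

theorem IsConcat.exists_eq_add (hc : IsConcat B χ data st) (i : ℤ) :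
    ∃ j, ∃ k < (B (χ j)).1.length, i = st j + k := by
  -- `j` is the last block starting at or before `i`; it exists because `st j - j` is monotone.
  have hmono : Monotone fun j => st j - j := monotone_int_of_le_succ fun j => by
    have := hc.2.1 j
    have := (B (χ j)).length_pos
    omega
  have hst₀ := hc.1
  obtain ⟨j, hj, hmax⟩ := Int.exists_greatest_of_bdd (P := fun j => st j ≤ i)
    ⟨max 0 i, fun j hj => by
      by_contra h
      have := hmono (show 0 ≤ j by omega)
      simp only at this
      omega⟩
    ⟨min 0 i, by
      have := hmono (min_le_left 0 i)
      simp only at this ⊢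
      omega⟩
  have hstep := hc.2.1 j
  have hlt : i < st (j + 1) := not_le.1 fun h => by have := hmax _ h; omega
  exact ⟨j, (i - st j).toNat, by omega, by omega⟩

theorem IsConcat.pos (hc : IsConcat B χ data st) (i : ℤ) :
    0 < (data i).1 ∧ 0 < (data i).2.1 ∧ 0 < (data i).2.2 := by
  obtain ⟨j, k, hk, rfl⟩ := hc.exists_eq_add i
  rw [hc.2.2 j k hk]
  exact (B (χ j)).2.2 _ (List.get_mem _ _)

theorem IsConcat.add_period {M N : ℕ} (hc : IsConcat B χ data st) (hχ : Periodic χ M)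
    (hN : st M = N) (j : ℤ) : st (j + M) = st j + N := by
  have hgap : Periodic (fun j => st (j + M) - st j) 1 := fun j => by
    have h₁ := hc.2.1 (j + M)
    have h₂ := hc.2.1 j
    rw [hχ j] at h₁
    show st (j + 1 + M) - st (j + 1) = st (j + M) - st j
    rw [show j + 1 + M = j + M + 1 by ring]
    omega
  have := hgap.int_mul_eq j
  simp only [Int.cast_id, mul_one, zero_add, hc.1, hN] at this
  omega

theorem IsConcat.periodic {M N : ℕ} (hc : IsConcat B χ data st) (hχ : Periodic χ M)
    (hN : st M = N) : Periodic data N := by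
  intro i
  obtain ⟨j, k, hk, rfl⟩ := hc.exists_eq_add i
  rw [show st j + k + N = st (j + M) + k by rw [hc.add_period hχ hN]; ring,
    hc.2.2 (j + M) k (by rwa [hχ j]), hc.2.2 j k hk]
  simp only [List.get_eq_getElem, hχ j]

theorem periodic_periodify {M : ℕ} (hM : 0 < M) (χM : Fin M → Fin D) :
    Periodic (periodify M hM χM) M := fun j => by
  simp only [periodify, Int.add_emod_right]

end Concat

section Resonators

/-- `bondTerm data i j = v_i² / (ℓ_i s_j)`, the contribution of the bond `j ∈ {i - 1, i}` to the
diagonal entry `b i`. -/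
def bondTerm (data : ℤ → ℝ × ℝ × ℝ) (i j : ℤ) : ℝ :=
  (data i).1 ^ 2 / ((data i).2.1 * (data j).2.2)

variable {data : ℤ → ℝ × ℝ × ℝ}

theorem bSeq_eq_bondTerm_add (i : ℤ) :
    bSeq data i = bondTerm data i (i - 1) + bondTerm data i i := by
  simp only [bSeq, bondTerm, mul_add, div_mul_div_comm, mul_one]

theorem aSeq_sq {i : ℤ} (h : 0 ≤ (data i).2.1 * (data (i + 1)).2.1) :
    aSeq data i ^ 2 = bondTerm data (i + 1) i * bondTerm data i i := by
  rw [aSeq, bondTerm, bondTerm, div_pow, neg_sq, mul_pow, mul_pow, Real.sq_sqrt h]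
  ring

theorem aSeq_neg {i : ℤ} (hi : 0 < (data i).1 ∧ 0 < (data i).2.1 ∧ 0 < (data i).2.2)
    (hi' : 0 < (data (i + 1)).1 ∧ 0 < (data (i + 1)).2.1) : aSeq data i < 0 := by
  have := Real.sqrt_pos.2 (mul_pos hi.2.1 hi'.2)
  rw [aSeq, neg_div]
  exact neg_neg_of_pos (div_pos (mul_pos hi.1 hi'.1) (mul_pos hi.2.2 this))

variable {c : ℤ}

theorem Function.Periodic.aSeq (h : Periodic data c) : Periodic (aSeq data) c := fun i => by
  simp only [_root_.aSeq, add_right_comm i c 1, h _]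

theorem Function.Periodic.bSeq (h : Periodic data c) : Periodic (bSeq data) c := fun i => by
  simp only [_root_.bSeq, show i + c - 1 = i - 1 + c by ring, h _]

theorem Function.Periodic.bondTerm (h : Periodic data c) (i j : ℤ) :
    bondTerm data (i + c) (j + c) = bondTerm data i j := by
  simp only [_root_.bondTerm, h _]

end Resonators

section FiniteMatrix

variable {data : ℤ → ℝ × ℝ × ℝ} {N : ℕ}

def finDiag (data : ℤ → ℝ × ℝ × ℝ) (N : ℕ) (i : ℤ) : ℝ :=
  if i = 0 then bondTerm data 0 0 else if i = N - 1 then bondTerm data i (i - 1) else bSeq data i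

theorem finJacobi_apply (i j : Fin N) :
    finJacobi data N i j =
      (if (j : ℤ) = (i : ℤ) - 1 then aSeq data ((i : ℤ) - 1) else 0) +
        (if (j : ℤ) = i then finDiag data N i else 0) +
          (if (j : ℤ) = (i : ℤ) + 1 then aSeq data i else 0) := by
  obtain ⟨i, hi⟩ := i
  obtain ⟨j, hj⟩ := j
  simp only [finJacobi, finDiag, bondTerm, Matrix.of_apply, Fin.mk.injEq]
  split_ifs <;> first | (exfalso; omega) | ring1 | (simp only [add_zero]; congr 1)

theorem extend_coe_fin_of_lt_zero_or_le (u : Fin N → ℝ) {i : ℤ} (hi : i < 0 ∨ N ≤ i) :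
    extend (fun j : Fin N => (j : ℤ)) u 0 i = 0 :=
  extend_apply' _ _ _ (by rintro ⟨j, rfl⟩; omega)

theorem injective_coe_fin_int : Injective fun j : Fin N => (j : ℤ) :=
  Nat.cast_injective.comp Fin.val_injective

theorem sum_ite_mul_eq_mul_extend (u : Fin N → ℝ) (k : ℤ) (c : ℝ) :
    ∑ j : Fin N, (if (j : ℤ) = k then c else 0) * u j =
      c * extend (fun j : Fin N => (j : ℤ)) u 0 k := by
  by_cases hk : ∃ j : Fin N, (j : ℤ) = k
  · obtain ⟨j₀, rfl⟩ := hk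
    rw [injective_coe_fin_int.extend_apply, sum_eq_single j₀ (fun j _ hj => by
      rw [if_neg (fun h => hj (injective_coe_fin_int h)), zero_mul]) (by simp), if_pos rfl]
  · rw [extend_apply' _ _ _ hk, Pi.zero_apply, mul_zero]
    exact sum_eq_zero fun j _ => by rw [if_neg (fun h => hk ⟨j, h⟩), zero_mul]

theorem finJacobi_mulVec_apply (u : Fin N → ℝ) (i : Fin N) :
    (finJacobi data N).mulVec u i =
      jacobiRow (aSeq data) (finDiag data N) (extend (fun j : Fin N => (j : ℤ)) u 0) i := by
  simp only [Matrix.mulVec, dotProduct, finJacobi_apply, add_mul, sum_add_distrib,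
    sum_ite_mul_eq_mul_extend, jacobiRow]

theorem exists_jacobiRow_eq_of_not_isUnit {lam : ℝ}
    (hsing : ¬IsUnit (finJacobi data N - lam • (1 : Matrix (Fin N) (Fin N) ℝ))) :
    ∃ w : ℤ → ℝ, w ≠ 0 ∧ (∀ i : ℤ, i < 0 ∨ N ≤ i → w i = 0) ∧
      ∀ i : ℤ, 0 ≤ i → i < N → jacobiRow (aSeq data) (finDiag data N) w i = lam * w i := by
  obtain ⟨u, hu₀, hu⟩ := Matrix.exists_mulVec_eq_zero_iff.2
    (by rwa [Matrix.isUnit_iff_isUnit_det, isUnit_iff_ne_zero, not_not] at hsing)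
  refine ⟨extend (fun j : Fin N => (j : ℤ)) u 0, fun h => hu₀ (funext fun j => ?_),
    fun i hi => extend_coe_fin_of_lt_zero_or_le u hi, fun i hi₀ hiN => ?_⟩
  · simpa [injective_coe_fin_int.extend_apply] using congrFun h j
  · obtain ⟨j, rfl⟩ : ∃ j : Fin N, (j : ℤ) = i := ⟨⟨i.toNat, by omega⟩, Int.toNat_of_nonneg hi₀⟩
    have h := congrFun hu j
    rw [Matrix.sub_mulVec, Matrix.smul_mulVec, Matrix.one_mulVec, Pi.sub_apply, Pi.smul_apply,
      smul_eq_mul, Pi.zero_apply, sub_eq_zero, finJacobi_mulVec_apply] at h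
    rw [h, injective_coe_fin_int.extend_apply]

theorem finDiag_zero : finDiag data N 0 = bSeq data 0 - bondTerm data 0 (-1) := by
  simp [finDiag, bSeq_eq_bondTerm_add]

theorem finDiag_last (hper : Periodic data N) (hN : 2 ≤ N) :
    finDiag data N (N - 1) = bSeq data (N - 1) - bondTerm data (-1) (-1) := by
  rw [finDiag, if_neg (by omega), if_pos rfl, bSeq_eq_bondTerm_add, ← hper.bondTerm (-1) (-1),
    neg_add_eq_sub]
  ring

theorem finDiag_of_lt {i : ℤ} (hi₀ : 0 < i) (hiN : i < N - 1) : finDiag data N i = bSeq data i := by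
  rw [finDiag, if_neg (by omega), if_neg (by omega)]

end FiniteMatrix

section Operators

variable {data : ℤ → ℝ × ℝ × ℝ}

def natEquivNegInt : ℕ ≃ {i : ℤ // i < 0} where
  toFun n := ⟨-n - 1, by omega⟩
  invFun i := (-i.1 - 1).toNat
  left_inv n := by simp
  right_inv i := Subtype.ext (by have := i.2; dsimp only; omega)

def negReflect : Hneg ≃ₗᵢ[ℝ] Hnat :=
  lp.reindex (by norm_num) natEquivNegInt

theorem IsJacobiPlusOf.isHalfLineJacobi {Jp : Hnat →L[ℝ] Hnat} (h : IsJacobiPlusOf data Jp) :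
    IsHalfLineJacobi (fun n : ℕ => aSeq data n)
      (fun n : ℕ => if n = 0 then bSeq data 0 - bondTerm data 0 (-1) else bSeq data n) Jp := by
  intro x
  funext n
  cases n with
  | zero =>
    rw [h.1 x]
    simp [jacobiAction, bSeq_eq_bondTerm_add, bondTerm]
  | succ n =>
    rw [h.2 x n]
    simp [jacobiAction]

theorem IsJacobiMinusOf.isHalfLineJacobi_conj {Jm : Hneg →L[ℝ] Hneg} (h : IsJacobiMinusOf data Jm) :
    IsHalfLineJacobi (fun n : ℕ => aSeq data (-n - 2))
      (fun n : ℕ => if n = 0 then bSeq data (-1) - bondTerm data (-1) (-1) else bSeq data (-n - 1))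
      (negReflect.toContinuousLinearEquiv.conjContinuousAlgEquiv Jm) := by
  intro y
  funext n
  simp only [ContinuousLinearEquiv.conjContinuousAlgEquiv_apply_apply,
    LinearIsometryEquiv.coe_toContinuousLinearEquiv, negReflect, lp.reindex_apply]
  cases n with
  | zero =>
    rw [show natEquivNegInt 0 = ⟨-1, by norm_num⟩ from Subtype.ext (by simp [natEquivNegInt]), h.1]
    simp [jacobiAction, bSeq_eq_bondTerm_add, bondTerm, natEquivNegInt]
  | succ n =>
    rw [show natEquivNegInt (n + 1) = ⟨-(n : ℤ) - 2, by omega⟩ from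
      Subtype.ext (by simp only [natEquivNegInt, Equiv.coe_fn_mk]; push_cast; ring),
      h.2 _ _ (by omega)]
    simp only [natEquivNegInt, Int.pred_toNat, LinearIsometryEquiv.coe_symm_toContinuousLinearEquiv,
      lp.reindex_symm_apply, Equiv.symm_mk, Equiv.coe_fn_mk, neg_sub, sub_neg_eq_add, neg_add_rev,
      Int.reduceNeg, jacobiAction, Nat.add_eq_zero_iff, one_ne_zero, and_false, ↓reduceIte,
      Nat.cast_add, Nat.cast_one]
    rw [show (1 - (-(n : ℤ) - 2)).toNat - 1 = n + 2 by omega,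
      show (2 + (n : ℤ)).toNat - 1 = n + 1 by omega,
      show (-1 + (2 + (n : ℤ))).toNat - 1 = n by omega,
      show -(n : ℤ) - 2 - 1 = -1 + -n - 2 by ring, show -1 + -(n : ℤ) - 1 = -n - 2 by ring]
    ring

end Operators

def sixPeriodicSeq : ℕ → ℝ
  | 0 => 1
  | 1 => 0
  | n + 2 => sixPeriodicSeq (n + 1) - sixPeriodicSeq n

theorem sixPeriodicSeq_add_six (n : ℕ) : sixPeriodicSeq (n + 6) = sixPeriodicSeq n := by
  have h3 : ∀ n, sixPeriodicSeq (n + 3) = -sixPeriodicSeq n := fun n => by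
    simp only [sixPeriodicSeq]
    ring
  rw [show n + 6 = n + 3 + 3 by ring, h3, h3, neg_neg]

theorem mem_spectrum_of_period_one {data : ℤ → ℝ × ℝ × ℝ} {Jp : Hnat →L[ℝ] Hnat}
    (hJp : IsJacobiPlusOf data Jp) (hper : Periodic data 1)
    (hpos : 0 < (data 0).1 ∧ 0 < (data 0).2.1 ∧ 0 < (data 0).2.2) :
    bondTerm data 0 0 ∈ spectrum ℝ Jp := by
  have hd : ∀ i, data i = data 0 := fun i => by simpa using hper.int_mul_eq i
  set c := bondTerm data 0 0
  have ha : ∀ i, aSeq data i = -c := fun i => by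
    rw [aSeq, hd i, hd (i + 1), Real.sqrt_mul_self hpos.2.1.le]
    simp only [c, bondTerm]
    field_simp
  have hb : ∀ i, bSeq data i = 2 * c := fun i => by
    simp only [bSeq_eq_bondTerm_add, bondTerm, hd i, hd (i - 1), c]
    ring
  refine hJp.isHalfLineJacobi.mem_spectrum_of_floquet (x := sixPeriodicSeq) (N := 6) (ν := 1) ?_
    (by norm_num) (fun n => by simp only [ha]) one_ne_zero (by simp)
    (fun n => by rw [sixPeriodicSeq_add_six, one_mul]) (by simp [sixPeriodicSeq])
  funext n
  cases n with
  | zero =>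
    have : bondTerm data 0 (-1) = c := by simp only [bondTerm, c, hd (-1)]
    simp only [jacobiAction, ↓reduceIte, hb, this, sixPeriodicSeq, Nat.cast_zero, mul_one,
      mul_zero, add_zero, Pi.smul_apply, smul_eq_mul]
    ring
  | succ n =>
    simp only [jacobiAction, ha, hb, if_neg n.succ_ne_zero, sixPeriodicSeq, Pi.smul_apply,
      smul_eq_mul]
    ring

theorem mem_spectrum_or_of_jacobiRow_eq {data : ℤ → ℝ × ℝ × ℝ} {N : ℕ} {lam : ℝ}
    {Jp : Hnat →L[ℝ] Hnat} {Jm : Hneg →L[ℝ] Hneg} (hJp : IsJacobiPlusOf data Jp)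
    (hJm : IsJacobiMinusOf data Jm) (hN : 2 ≤ N) (hper : Periodic data N)
    (hpos : ∀ i, 0 < (data i).1 ∧ 0 < (data i).2.1 ∧ 0 < (data i).2.2) {w : ℤ → ℝ} (hw : w ≠ 0)
    (hsupp : ∀ i : ℤ, i < 0 ∨ N ≤ i → w i = 0)
    (hrow : ∀ i : ℤ, 0 ≤ i → i < N → jacobiRow (aSeq data) (finDiag data N) w i = lam * w i) :
    lam ∈ spectrum ℝ Jp ∨ lam ∈ spectrum ℝ Jm := by
  have ha₀ : ∀ i, aSeq data i ≠ 0 := fun i => (aSeq_neg (hpos i) ⟨(hpos _).1, (hpos _).2.1⟩).ne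
  have hpq : aSeq data (-1) ^ 2 = bondTerm data 0 (-1) * bondTerm data (-1) (-1) := by
    simpa using aSeq_sq (data := data) (i := -1) (mul_pos (hpos _).2.1 (hpos _).2.1).le
  have hq : bondTerm data (-1) (-1) ≠ 0 :=
    (div_pos (pow_pos (hpos _).1 2) (mul_pos (hpos _).2.1 (hpos _).2.2)).ne'
  obtain ⟨μ, hμ, x, hxμ, hx₀, hx, hcut₀, hcut₁⟩ := exists_floquet_solution (by omega)
    hper.aSeq hper.bSeq ha₀ hpq hq finDiag_zero (finDiag_last hper hN) (fun _ => finDiag_of_lt)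
    hsupp hw hrow
  rcases le_total |μ| 1 with hμ₁ | hμ₁
  · exact .inl (hJp.isHalfLineJacobi.mem_spectrum_of_cut (by omega) hper.aSeq hx hcut₀ hxμ hμ hμ₁
      hx₀)
  · have hx₁ : x (-1) ≠ 0 := fun h => by
      rw [h, mul_zero, add_zero] at hcut₁
      exact hx₀ ((mul_eq_zero.1 hcut₁).resolve_left (ha₀ _))
    rw [← AlgEquiv.spectrum_eq negReflect.toContinuousLinearEquiv.conjContinuousAlgEquiv Jm]
    exact .inr (hJm.isHalfLineJacobi_conj.mem_spectrum_of_cut_neg (by omega) hper.aSeq hx hcut₁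
      hxμ hμ hμ₁ hx₁)

theorem stmt_17 (D M N : ℕ) (hM : 0 < M) (B : Fin D → Block) (χM : Fin M → Fin D)
    (data : ℤ → ℝ × ℝ × ℝ) (st : ℤ → ℤ)
    (hconcat : IsConcat B (periodify M hM χM) data st)
    (hN : st (M : ℤ) = (N : ℤ))
    (Jp : Hnat →L[ℝ] Hnat) (hJp : IsJacobiPlusOf data Jp)
    (Jm : Hneg →L[ℝ] Hneg) (hJm : IsJacobiMinusOf data Jm)
    (lam : ℝ)
    (hsing : ¬ IsUnit (finJacobi data N - lam • (1 : Matrix (Fin N) (Fin N) ℝ))) :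
    lam ∈ spectrum ℝ Jp ∨ lam ∈ spectrum ℝ Jm := by
  obtain ⟨w, hw, hsupp, hrow⟩ := exists_jacobiRow_eq_of_not_isUnit hsing
  have hpos := hconcat.pos
  have hper := hconcat.periodic (periodic_periodify hM χM) hN
  rcases (show N = 0 ∨ N = 1 ∨ 2 ≤ N by omega) with rfl | rfl | hN₂
  · exact absurd (funext fun i => hsupp i (by omega)) hw
  · have hw₀ : w 0 ≠ 0 := fun h => hw (funext fun i => by
      rcases eq_or_ne i 0 with rfl | hi
      · exact h
      · exact hsupp i (by omega))
    have h := hrow 0 le_rfl one_pos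
    simp only [jacobiRow, hsupp (0 - 1) (by omega), hsupp 1 (by omega), finDiag, if_true,
      mul_zero, zero_add, add_zero] at h
    rw [← mul_right_cancel₀ hw₀ h]
    exact .inl (mem_spectrum_of_period_one hJp (by simpa using hper) (hpos 0))
  · exact mem_spectrum_or_of_jacobiRow_eq hJp hJm hN₂ hper hpos hw hsupp hrow
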